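/- Let Q, Σ, Σ′ be d×d correlation matrices. Then |B²(Q,Σ) − B²(Q,Σ′)| ≤ 2 d^{3/4} ‖Q‖_op^{1/2} ‖Σ − Σ′‖_F^{1/2}, where ‖Q‖_op denotes the spectral (ℓ²-operator) norm of Q. -/

import Mathlib

open Matrix Real

/-- The positive semidefinite square root of a positive semidefinite real matrix
(junk value `0` on matrices that are not positive semidefinite). -/
noncomputable def msqrt {d : ℕ} (A : Matrix (Fin d) (Fin d) ℝ) : Matrix (Fin d) (Fin d) ℝ :=
  open scoped Classical in
  if h : A.PosSemidef then
    (h.1.eigenvectorUnitary : Matrix (Fin d) (Fin d) ℝ) *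
      Matrix.diagonal ((↑) ∘ (√·) ∘ h.1.eigenvalues) *
      (star h.1.eigenvectorUnitary : Matrix (Fin d) (Fin d) ℝ)
  else 0

/-- The squared Bures–Wasserstein distance
`B²(S,Q) = tr S + tr Q − 2 tr((S^{1/2} Q S^{1/2})^{1/2})`. -/
noncomputable def sqB {d : ℕ} (S Q : Matrix (Fin d) (Fin d) ℝ) : ℝ :=
  S.trace + Q.trace - 2 * (msqrt (msqrt S * Q * msqrt S)).trace

/-- The Bures–Wasserstein distance `B(S,Q)`. -/
noncomputable def bw {d : ℕ} (S Q : Matrix (Fin d) (Fin d) ℝ) : ℝ :=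
  Real.sqrt (sqB S Q)

/-- The Frobenius (Hilbert–Schmidt) norm of a matrix. -/
noncomputable def frobNorm {d : ℕ} (A : Matrix (Fin d) (Fin d) ℝ) : ℝ :=
  Real.sqrt (∑ i, ∑ j, (A i j) ^ 2)

/-- The spectral (`ℓ²`-operator) norm of a matrix. -/
noncomputable def opNorm {d : ℕ} (A : Matrix (Fin d) (Fin d) ℝ) : ℝ :=
  ‖Matrix.toEuclideanCLM (𝕜 := ℝ) A‖

/-- A correlation matrix: real symmetric positive semidefinite with unit diagonal. -/
def IsCorrMat {d : ℕ} (A : Matrix (Fin d) (Fin d) ℝ) : Prop :=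
  A.PosSemidef ∧ ∀ i, A i i = 1

/-- The 2×2 correlation matrix with off-diagonal entry `ρ`. -/
def corr2 (ρ : ℝ) : Matrix (Fin 2) (Fin 2) ℝ := !![1, ρ; ρ, 1]

/-- The Gaussian optimal transport matrix `T_Σ^Q = Σ^{-1/2} (Σ^{1/2} Q Σ^{1/2})^{1/2} Σ^{-1/2}`. -/
noncomputable def otMap {d : ℕ} (S Q : Matrix (Fin d) (Fin d) ℝ) : Matrix (Fin d) (Fin d) ℝ :=
  (msqrt S)⁻¹ * msqrt (msqrt S * Q * msqrt S) * (msqrt S)⁻¹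

/-- Symmetric normalization `D(Σ)^{-1/2} Σ D(Σ)^{-1/2}` of a matrix by its diagonal. -/
noncomputable def symNormalize {d : ℕ} (S : Matrix (Fin d) (Fin d) ℝ) :
    Matrix (Fin d) (Fin d) ℝ :=
  Matrix.diagonal (fun i => (Real.sqrt (S i i))⁻¹) * S *
    Matrix.diagonal (fun i => (Real.sqrt (S i i))⁻¹)


open scoped Matrix.Norms.L2Operator

@[reducible] noncomputable def Matrix.PosSemidef.sqrt {d : ℕ} {A : Matrix (Fin d) (Fin d) ℝ} (h : A.PosSemidef) :
    Matrix (Fin d) (Fin d) ℝ :=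
  (h.1.eigenvectorUnitary : Matrix (Fin d) (Fin d) ℝ) *
    Matrix.diagonal ((↑) ∘ (√·) ∘ h.1.eigenvalues) *
    (star h.1.eigenvectorUnitary : Matrix (Fin d) (Fin d) ℝ)

lemma Matrix.PosSemidef.posSemidef_sqrt {d : ℕ} {A : Matrix (Fin d) (Fin d) ℝ}
    (h : A.PosSemidef) : h.sqrt.PosSemidef := by
  have hD : (Matrix.diagonal ((↑) ∘ (√·) ∘ h.1.eigenvalues) : Matrix (Fin d) (Fin d) ℝ).PosSemidef :=
    Matrix.posSemidef_diagonal_iff.mpr fun i => by simp [Real.sqrt_nonneg]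
  have := hD.mul_mul_conjTranspose_same (h.1.eigenvectorUnitary : Matrix (Fin d) (Fin d) ℝ)
  rwa [← Matrix.star_eq_conjTranspose, ← Unitary.coe_star] at this

lemma Matrix.PosSemidef.sqrt_mul_self {d : ℕ} {A : Matrix (Fin d) (Fin d) ℝ}
    (h : A.PosSemidef) : h.sqrt * h.sqrt = A := by
  set U : Matrix (Fin d) (Fin d) ℝ := (h.1.eigenvectorUnitary : Matrix (Fin d) (Fin d) ℝ) with hU
  have hsUU : star U * U = 1 := Unitary.coe_star_mul_self h.1.eigenvectorUnitary
  have hspec := h.1.spectral_theorem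
  rw [Unitary.conjStarAlgAut_apply] at hspec
  have hdd : Matrix.diagonal (((↑) ∘ (√·) ∘ h.1.eigenvalues) : Fin d → ℝ) *
      Matrix.diagonal ((↑) ∘ (√·) ∘ h.1.eigenvalues) = Matrix.diagonal (RCLike.ofReal ∘ h.1.eigenvalues) := by
    rw [Matrix.diagonal_mul_diagonal]
    congr 1; funext i
    simp [Real.mul_self_sqrt (h.eigenvalues_nonneg i)]
  calc h.sqrt * h.sqrt
      = U * Matrix.diagonal ((↑) ∘ (√·) ∘ h.1.eigenvalues) * (star U * U) *
          Matrix.diagonal ((↑) ∘ (√·) ∘ h.1.eigenvalues) * star U := by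
        simp only [Matrix.PosSemidef.sqrt, hU, Unitary.coe_star, Matrix.mul_assoc]
    _ = U * Matrix.diagonal (RCLike.ofReal ∘ h.1.eigenvalues) * star U := by
        rw [hsUU, Matrix.mul_one, Matrix.mul_assoc U, hdd]
    _ = A := by rw [hU, ← Unitary.coe_star]; exact hspec.symm

namespace SqBAux

variable {d : ℕ}

noncomputable def frob2 (M : Matrix (Fin d) (Fin d) ℝ) : ℝ := ∑ i, ∑ j, (M i j)^2

lemma frob2_nonneg (M : Matrix (Fin d) (Fin d) ℝ) : 0 ≤ frob2 M := by
  unfold frob2; positivity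

lemma frob2_transpose (M : Matrix (Fin d) (Fin d) ℝ) : frob2 Mᵀ = frob2 M := by
  unfold frob2
  simp only [transpose_apply]
  exact Finset.sum_comm ..

lemma frob2_eq_trace (M : Matrix (Fin d) (Fin d) ℝ) : frob2 M = (Mᵀ * M).trace := by
  unfold frob2
  simp only [Matrix.trace, Matrix.diag, Matrix.mul_apply, transpose_apply, sq]
  exact Finset.sum_comm ..

lemma sum_abs_le (f : Fin d → ℝ) :
    ∑ i, |f i| ≤ Real.sqrt d * Real.sqrt (∑ i, (f i)^2) := by
  have h : (∑ i, |f i|)^2 ≤ (d : ℝ) * ∑ i, (f i)^2 := by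
    calc (∑ i, |f i|)^2 ≤ ((Finset.univ : Finset (Fin d)).card : ℝ) * ∑ i, |f i|^2 := by
          exact_mod_cast sq_sum_le_card_mul_sum_sq (s := (Finset.univ : Finset (Fin d))) (f := fun i => |f i|)
      _ = (d : ℝ) * ∑ i, (f i)^2 := by simp [sq_abs]
  have h0 : 0 ≤ ∑ i, |f i| := Finset.sum_nonneg fun i _ => abs_nonneg _
  calc ∑ i, |f i| = Real.sqrt ((∑ i, |f i|)^2) := (Real.sqrt_sq h0).symm
    _ ≤ Real.sqrt ((d : ℝ) * ∑ i, (f i)^2) := Real.sqrt_le_sqrt h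
    _ = Real.sqrt d * Real.sqrt (∑ i, (f i)^2) := Real.sqrt_mul (by positivity) _

lemma abs_trace_le (M : Matrix (Fin d) (Fin d) ℝ) :
    |M.trace| ≤ Real.sqrt d * Real.sqrt (frob2 M) := by
  have h1 : |M.trace| ≤ ∑ i, |M i i| := by
    simpa [Matrix.trace, Matrix.diag] using Finset.abs_sum_le_sum_abs (fun i => M i i) Finset.univ
  have h2 : ∑ i, (M i i)^2 ≤ frob2 M := by
    unfold frob2
    exact Finset.sum_le_sum fun i _ =>
      Finset.single_le_sum (f := fun j => (M i j)^2) (fun j _ => sq_nonneg _) (Finset.mem_univ i)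
  calc |M.trace| ≤ ∑ i, |M i i| := h1
    _ ≤ Real.sqrt d * Real.sqrt (∑ i, (M i i)^2) := sum_abs_le _
    _ ≤ Real.sqrt d * Real.sqrt (frob2 M) := by
        gcongr

lemma conj_mul_conj {U : Matrix (Fin d) (Fin d) ℝ} (hU : U * star U = 1)
    (X Y : Matrix (Fin d) (Fin d) ℝ) :
    (star U * X * U) * (star U * Y * U) = star U * (X * Y) * U := by
  calc (star U * X * U) * (star U * Y * U)
      = star U * X * (U * star U) * Y * U := by noncomm_ring
    _ = star U * (X * Y) * U := by rw [hU]; noncomm_ring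

lemma conj_diag_nonneg {U M : Matrix (Fin d) (Fin d) ℝ} (hM : M.PosSemidef) (i : Fin d) :
    0 ≤ (star U * M * U) i i := by
  have h : (star U * M * U).PosSemidef := by
    have := hM.conjTranspose_mul_mul_same U
    rwa [← Matrix.star_eq_conjTranspose] at this
  exact h.diag_nonneg

lemma powers_stormer {A B : Matrix (Fin d) (Fin d) ℝ} (hA : A.PosSemidef) (hB : B.PosSemidef) :
    frob2 (hA.sqrt - hB.sqrt) ≤ Real.sqrt d * Real.sqrt (frob2 (A - B)) := by
  set P := hA.sqrt with hPdef
  set R := hB.sqrt with hRdef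
  have hPp : P.PosSemidef := hA.posSemidef_sqrt
  have hRp : R.PosSemidef := hB.posSemidef_sqrt
  set C : Matrix (Fin d) (Fin d) ℝ := P - R with hCdef
  have hC : C.IsHermitian := hPp.isHermitian.sub hRp.isHermitian
  set U : Matrix (Fin d) (Fin d) ℝ := (hC.eigenvectorUnitary : Matrix (Fin d) (Fin d) ℝ) with hUdef
  set lam := hC.eigenvalues with hlamdef
  have hsUU : star U * U = 1 := by
    simpa [hUdef] using Unitary.coe_star_mul_self hC.eigenvectorUnitary
  have hUsU : U * star U = 1 := by
    simpa [hUdef] using Unitary.coe_mul_star_self hC.eigenvectorUnitary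
  have hdiag : star U * C * U = diagonal lam := by
    have := hC.conjStarAlgAut_star_eigenvectorUnitary
    rw [Unitary.conjStarAlgAut_star_apply] at this
    simpa [hUdef, hlamdef, Function.comp] using this
  -- D = P C + C R
  have hD : A - B = P * C + C * R := by
    have h1 : P * C + C * R = P * P - R * R := by rw [hCdef]; noncomm_ring
    rw [h1, hPdef, hRdef, hA.sqrt_mul_self, hB.sqrt_mul_self]
  have hD' : star U * (A - B) * U
      = (star U * P * U) * diagonal lam + diagonal lam * (star U * R * U) := by
    rw [hD]
    have : star U * (P * C + C * R) * U
        = (star U * P * U) * (star U * C * U) + (star U * C * U) * (star U * R * U) := by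
      rw [conj_mul_conj hUsU, conj_mul_conj hUsU]
      noncomm_ring
    rw [this, hdiag]
  -- |lam i| ≤ P'_{ii} + R'_{ii}
  have key : ∀ i, lam i ^ 2 ≤ |(star U * (A - B) * U) i i| := by
    intro i
    set a := (star U * P * U) i i with ha
    set b := (star U * R * U) i i with hb
    have hDii : (star U * (A - B) * U) i i = lam i * (a + b) := by
      rw [hD']
      simp [Matrix.add_apply, Matrix.mul_diagonal, Matrix.diagonal_mul, ha, hb]
      ring
    have hab1 : 0 ≤ a + b - lam i := by
      have hpsd : (P + R - C).PosSemidef := by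
        have : P + R - C = R + R := by rw [hCdef]; abel
        rw [this]; exact hRp.add hRp
      have h0 := conj_diag_nonneg (U := U) hpsd i
      have : star U * (P + R - C) * U
          = star U * P * U + star U * R * U - star U * C * U := by noncomm_ring
      rw [this] at h0
      simpa [Matrix.sub_apply, Matrix.add_apply, hdiag, ha, hb] using h0
    have hab2 : 0 ≤ a + b + lam i := by
      have hpsd : (P + R + C).PosSemidef := by
        have : P + R + C = P + P := by rw [hCdef]; abel
        rw [this]; exact hPp.add hPp
      have h0 := conj_diag_nonneg (U := U) hpsd i
      have : star U * (P + R + C) * U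
          = star U * P * U + star U * R * U + star U * C * U := by noncomm_ring
      rw [this] at h0
      simpa [Matrix.add_apply, hdiag, ha, hb] using h0
    have habs : |lam i| ≤ a + b := abs_le.mpr ⟨by linarith, by linarith⟩
    calc lam i ^ 2 = |lam i| * |lam i| := by rw [sq, ← abs_mul_abs_self]
      _ ≤ |lam i| * (a + b) := by
          exact mul_le_mul_of_nonneg_left habs (abs_nonneg _)
      _ = |lam i * (a + b)| := by
          rw [abs_mul, abs_of_nonneg (by linarith [abs_nonneg (lam i)] : (0:ℝ) ≤ a + b)]
      _ = |(star U * (A - B) * U) i i| := by rw [hDii]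
  -- frob2 C = ∑ lam i ^ 2
  have hCt : Cᵀ = C := by
    have := hC.eq
    rwa [Matrix.conjTranspose_eq_transpose_of_trivial] at this
  have hCspec : C = U * diagonal lam * star U := by
    calc C = (U * star U) * C * (U * star U) := by rw [hUsU]; noncomm_ring
      _ = U * (star U * C * U) * star U := by noncomm_ring
      _ = U * diagonal lam * star U := by rw [hdiag]
  have hfrobC : frob2 C = ∑ i, lam i ^ 2 := by
    rw [frob2_eq_trace, hCt]
    conv_lhs => rw [hCspec]
    have : (U * diagonal lam * star U) * (U * diagonal lam * star U)
        = U * (diagonal lam * diagonal lam) * star U := by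
      calc (U * diagonal lam * star U) * (U * diagonal lam * star U)
          = U * diagonal lam * (star U * U) * diagonal lam * star U := by noncomm_ring
        _ = U * (diagonal lam * diagonal lam) * star U := by rw [hsUU]; noncomm_ring
    rw [this, Matrix.trace_mul_cycle, ← Matrix.mul_assoc, hsUU, Matrix.one_mul,
      Matrix.diagonal_mul_diagonal, Matrix.trace_diagonal]
    exact Finset.sum_congr rfl fun i _ => (sq (lam i)).symm ▸ rfl
  -- frob2 of conjugation
  have hfrobD : frob2 (star U * (A - B) * U) = frob2 (A - B) := by
    set D := A - B with hDdef
    have hstar : ∀ M : Matrix (Fin d) (Fin d) ℝ, star M = Mᵀ := fun M => by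
      rw [Matrix.star_eq_conjTranspose, Matrix.conjTranspose_eq_transpose_of_trivial]
    rw [frob2_eq_trace, frob2_eq_trace]
    have ht : (star U * D * U)ᵀ = star U * Dᵀ * U := by
      rw [Matrix.transpose_mul, Matrix.transpose_mul, ← hstar U, ← hstar (star U), star_star]
      noncomm_ring
    rw [ht, conj_mul_conj hUsU]
    rw [Matrix.trace_mul_cycle]
    rw [hUsU, Matrix.one_mul]
  -- combine
  have step1 : frob2 C ≤ ∑ i, |(star U * (A - B) * U) i i| := by
    rw [hfrobC]; exact Finset.sum_le_sum fun i _ => key i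
  have step2 : ∑ i, |(star U * (A - B) * U) i i|
      ≤ Real.sqrt d * Real.sqrt (frob2 (A - B)) := by
    calc ∑ i, |(star U * (A - B) * U) i i|
        ≤ Real.sqrt d * Real.sqrt (∑ i, ((star U * (A - B) * U) i i)^2) := sum_abs_le _
      _ ≤ Real.sqrt d * Real.sqrt (frob2 (star U * (A - B) * U)) := by
          gcongr
          unfold frob2
          exact Finset.sum_le_sum fun i _ =>
            Finset.single_le_sum (f := fun j => ((star U * (A - B) * U) i j)^2)
              (fun j _ => sq_nonneg _) (Finset.mem_univ i)
      _ = Real.sqrt d * Real.sqrt (frob2 (A - B)) := by rw [hfrobD]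
  exact le_trans step1 step2

lemma frob2_mul_left (X Y : Matrix (Fin d) (Fin d) ℝ) :
    frob2 (X * Y) ≤ ‖X‖^2 * frob2 Y := by
  have hcol : ∀ j, ∑ i, ((X * Y) i j)^2 ≤ ‖X‖^2 * ∑ i, (Y i j)^2 := by
    intro j
    set v : EuclideanSpace ℝ (Fin d) := (WithLp.equiv 2 _).symm (fun i => Y i j) with hv
    have h1 := X.l2_opNorm_mulVec v
    have hw : ‖(EuclideanSpace.equiv (Fin d) ℝ).symm (X *ᵥ v)‖^2 = ∑ i, ((X * Y) i j)^2 := by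
      rw [EuclideanSpace.norm_eq, Real.sq_sqrt (by positivity)]
      refine Finset.sum_congr rfl fun i _ => ?_
      simp only [Real.norm_eq_abs, sq_abs]
      have he : (EuclideanSpace.equiv (Fin d) ℝ).symm (X *ᵥ v) i = (X * Y) i j := by
        simp [EuclideanSpace.equiv, hv, Matrix.mul_apply, Matrix.mulVec, dotProduct]
      rw [he]
    have hvn : ‖v‖^2 = ∑ i, (Y i j)^2 := by
      rw [EuclideanSpace.norm_eq, Real.sq_sqrt (by positivity)]
      refine Finset.sum_congr rfl fun i _ => ?_
      simp [Real.norm_eq_abs, sq_abs, hv]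
    calc ∑ i, ((X * Y) i j)^2 = ‖(EuclideanSpace.equiv (Fin d) ℝ).symm (X *ᵥ v)‖^2 := hw.symm
      _ ≤ (‖X‖ * ‖v‖)^2 := by
          apply sq_le_sq' <;> nlinarith [norm_nonneg ((EuclideanSpace.equiv (Fin d) ℝ).symm (X *ᵥ v)), norm_nonneg v, norm_nonneg X, mul_nonneg (norm_nonneg X) (norm_nonneg v)]
      _ = ‖X‖^2 * ‖v‖^2 := by ring
      _ = ‖X‖^2 * ∑ i, (Y i j)^2 := by rw [hvn]
  calc frob2 (X * Y) = ∑ j, ∑ i, ((X * Y) i j)^2 := Finset.sum_comm ..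
    _ ≤ ∑ j, ‖X‖^2 * ∑ i, (Y i j)^2 := Finset.sum_le_sum fun j _ => hcol j
    _ = ‖X‖^2 * ∑ j, ∑ i, (Y i j)^2 := by rw [Finset.mul_sum]
    _ = ‖X‖^2 * frob2 Y := by rw [show ∑ j, ∑ i, (Y i j)^2 = frob2 Y from Finset.sum_comm ..]

lemma frob2_mul_right (X Y : Matrix (Fin d) (Fin d) ℝ) :
    frob2 (Y * X) ≤ ‖X‖^2 * frob2 Y := by
  have h1 : frob2 (Y * X) = frob2 (Xᵀ * Yᵀ) := by
    rw [← frob2_transpose (Y * X), Matrix.transpose_mul]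
  have h2 : ‖Xᵀ‖ = ‖X‖ := by
    rw [← Matrix.conjTranspose_eq_transpose_of_trivial]
    exact Matrix.l2_opNorm_conjTranspose X
  calc frob2 (Y * X) = frob2 (Xᵀ * Yᵀ) := h1
    _ ≤ ‖Xᵀ‖^2 * frob2 Yᵀ := frob2_mul_left _ _
    _ = ‖X‖^2 * frob2 Y := by rw [h2, frob2_transpose]

lemma frobNorm_eq {d : ℕ} (M : Matrix (Fin d) (Fin d) ℝ) :
    frobNorm M = Real.sqrt (frob2 M) := rfl

lemma trace_sqrt_diff {A B : Matrix (Fin d) (Fin d) ℝ} (hA : A.PosSemidef) (hB : B.PosSemidef) :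
    |(hA.sqrt).trace - (hB.sqrt).trace| ≤
      Real.sqrt d * Real.sqrt (Real.sqrt d * Real.sqrt (frob2 (A - B))) := by
  have h0 := abs_trace_le (hA.sqrt - hB.sqrt)
  rw [Matrix.trace_sub] at h0
  refine h0.trans ?_
  gcongr
  exact powers_stormer hA hB

end SqBAux

open SqBAux in
/-- For `d×d` correlation matrices `Q, Σ, Σ'`,
`|B²(Q,Σ) − B²(Q,Σ')| ≤ 2 d^{3/4} ‖Q‖_op^{1/2} ‖Σ − Σ'‖_F^{1/2}`. -/
theorem sqB_holder_bound {d : ℕ} (Q S1 S2 : Matrix (Fin d) (Fin d) ℝ)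
    (hQ : IsCorrMat Q) (hS1 : IsCorrMat S1) (hS2 : IsCorrMat S2) :
    |sqB Q S1 - sqB Q S2| ≤
      2 * (d : ℝ) ^ ((3 : ℝ) / 4) * (opNorm Q) ^ ((1 : ℝ) / 2) *
        (frobNorm (S1 - S2)) ^ ((1 : ℝ) / 2) := by
  have hQp : Q.PosSemidef := hQ.1
  set P : Matrix (Fin d) (Fin d) ℝ := msqrt Q with hP0
  have hPdef : P = hQp.sqrt := by rw [hP0, msqrt, dif_pos hQp]
  have hPp : P.PosSemidef := by rw [hPdef]; exact hQp.posSemidef_sqrt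
  have hPH : Pᴴ = P := hPp.isHermitian.eq
  have hPP : P * P = Q := by rw [hPdef]; exact hQp.sqrt_mul_self
  have hA : (P * S1 * P).PosSemidef := by
    have := hS1.1.mul_mul_conjTranspose_same P
    rwa [hPH] at this
  have hB : (P * S2 * P).PosSemidef := by
    have := hS2.1.mul_mul_conjTranspose_same P
    rwa [hPH] at this
  have etr : ∀ S : Matrix (Fin d) (Fin d) ℝ, (∀ i, S i i = 1) → S.trace = d := by
    intro S hS
    simp [Matrix.trace, Matrix.diag, hS]
  have e1 : sqB Q S1 - sqB Q S2 = 2 * ((hB.sqrt).trace - (hA.sqrt).trace) := by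
    rw [sqB, sqB, etr S1 hS1.2, etr S2 hS2.2, ← hP0]
    rw [show msqrt (P * S1 * P) = hA.sqrt by rw [msqrt, dif_pos hA]]
    rw [show msqrt (P * S2 * P) = hB.sqrt by rw [msqrt, dif_pos hB]]
    ring
  have habs : |sqB Q S1 - sqB Q S2| = 2 * |(hA.sqrt).trace - (hB.sqrt).trace| := by
    rw [e1, abs_mul, abs_two, abs_sub_comm]
  set f : ℝ := frobNorm (S1 - S2) with hf
  have hf0 : 0 ≤ f := Real.sqrt_nonneg _
  have hQ0 : (0:ℝ) ≤ ‖Q‖ := norm_nonneg _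
  have hd0 : (0:ℝ) ≤ (d:ℝ) := Nat.cast_nonneg _
  have hsub : P * S1 * P - P * S2 * P = P * (S1 - S2) * P := by noncomm_ring
  -- Frobenius bound through the operator norm
  have hfr : Real.sqrt (frob2 (P * (S1 - S2) * P)) ≤ ‖Q‖ * f := by
    have hQP : ‖Q‖ = ‖P‖ * ‖P‖ := by
      have := Matrix.l2_opNorm_conjTranspose_mul_self P
      rw [hPH, hPP] at this
      exact this
    have h1 : frob2 (P * (S1 - S2) * P) ≤ (‖P‖ * ‖P‖) ^ 2 * frob2 (S1 - S2) := by
      calc frob2 (P * (S1 - S2) * P) ≤ ‖P‖ ^ 2 * frob2 (P * (S1 - S2)) :=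
            frob2_mul_right P (P * (S1 - S2))
        _ ≤ ‖P‖ ^ 2 * (‖P‖ ^ 2 * frob2 (S1 - S2)) := by
            have := frob2_mul_left P (S1 - S2)
            nlinarith [sq_nonneg ‖P‖]
        _ = (‖P‖ * ‖P‖) ^ 2 * frob2 (S1 - S2) := by ring
    calc Real.sqrt (frob2 (P * (S1 - S2) * P))
        ≤ Real.sqrt ((‖P‖ * ‖P‖) ^ 2 * frob2 (S1 - S2)) := Real.sqrt_le_sqrt h1
      _ = (‖P‖ * ‖P‖) * Real.sqrt (frob2 (S1 - S2)) := by
          rw [Real.sqrt_mul (sq_nonneg _), Real.sqrt_sq (by positivity)]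
      _ = ‖Q‖ * f := by rw [← hQP, hf, frobNorm_eq]
  have hmain : |sqB Q S1 - sqB Q S2| ≤
      2 * (Real.sqrt d * Real.sqrt (Real.sqrt d * (‖Q‖ * f))) := by
    rw [habs]
    have h2 := trace_sqrt_diff hA hB
    rw [hsub] at h2
    calc 2 * |(hA.sqrt).trace - (hB.sqrt).trace|
        ≤ 2 * (Real.sqrt d * Real.sqrt (Real.sqrt d * Real.sqrt (frob2 (P * (S1 - S2) * P)))) := by
          linarith
      _ ≤ 2 * (Real.sqrt d * Real.sqrt (Real.sqrt d * (‖Q‖ * f))) := by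
          gcongr
  have hop : opNorm Q = ‖Q‖ := rfl
  have key : Real.sqrt (d:ℝ) * Real.sqrt (Real.sqrt (d:ℝ) * (‖Q‖ * f))
      = (d:ℝ) ^ ((3:ℝ)/4) * ‖Q‖ ^ ((1:ℝ)/2) * f ^ ((1:ℝ)/2) := by
    rw [Real.sqrt_mul (Real.sqrt_nonneg _), Real.sqrt_mul hQ0]
    have h34 : Real.sqrt (d:ℝ) * Real.sqrt (Real.sqrt (d:ℝ)) = (d:ℝ) ^ ((3:ℝ)/4) := by
      rw [Real.sqrt_eq_rpow, Real.sqrt_eq_rpow]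
      rw [← Real.rpow_mul hd0]
      rw [← Real.rpow_add' hd0 (by norm_num)]
      norm_num
    rw [Real.sqrt_eq_rpow ‖Q‖, Real.sqrt_eq_rpow f]
    rw [show Real.sqrt (d:ℝ) * (Real.sqrt (Real.sqrt (d:ℝ)) * (‖Q‖ ^ ((1:ℝ)/2) * f ^ ((1:ℝ)/2)))
        = (Real.sqrt (d:ℝ) * Real.sqrt (Real.sqrt (d:ℝ))) * ‖Q‖ ^ ((1:ℝ)/2) * f ^ ((1:ℝ)/2) by ring,
      h34]
  rw [hop]
  calc |sqB Q S1 - sqB Q S2| ≤ 2 * (Real.sqrt d * Real.sqrt (Real.sqrt d * (‖Q‖ * f))) := hmain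
    _ = 2 * ((d:ℝ) ^ ((3:ℝ)/4) * ‖Q‖ ^ ((1:ℝ)/2) * f ^ ((1:ℝ)/2)) := by rw [key]
    _ = 2 * (d:ℝ) ^ ((3:ℝ)/4) * ‖Q‖ ^ ((1:ℝ)/2) * f ^ ((1:ℝ)/2) := by ring
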